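/- arXiv:1806.00432 — 5 statements merged into one kernel-verified Lean document; each statement's English description precedes it below -/
import Mathlib

section
/- The polynomial x^{155} + x^{93} + x^{62} + x^{31} + 1 is irreducible over F_2. -/
/-!
The polynomial is `g(X ^ 31)` for `g = X ^ 5 + X ^ 3 + X ^ 2 + X + 1`, which is one of the six
quintic factors of `Φ₃₁` over `𝔽₂`. Hence it divides `Φ₃₁(X ^ 31) = Φ₉₆₁`. Every irreducible
factor of `Φ₉₆₁` over `𝔽₂` has degree equal to the order of `2` modulo `961 = 31 ^ 2`, which is
`155`, so a factor of `Φ₉₆₁` of degree `155` is irreducible.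
-/

open Polynomial

theorem expand_dvd_cyclotomic_mul {R : Type*} [CommRing R] {p n : ℕ} (hp : p.Prime) (hpn : p ∣ n)
    {g : R[X]} (hg : g ∣ cyclotomic n R) : expand R p g ∣ cyclotomic (n * p) R := by
  obtain ⟨h, hgh⟩ := hg
  exact ⟨expand R p h, by rw [← cyclotomic_expand_eq_cyclotomic hp hpn, hgh, map_mul]⟩

theorem quintic_dvd_cyclotomic_31 :
    (X ^ 5 + X ^ 3 + X ^ 2 + X + 1 : (ZMod 2)[X]) ∣ cyclotomic 31 (ZMod 2) := by
  have : Fact (Nat.Prime 31) := ⟨by norm_num⟩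
  refine ⟨X ^ 25 + X ^ 24 + X ^ 22 + X ^ 21 + X ^ 18 + X ^ 17 + X ^ 16 + X ^ 15 + X ^ 13 +
    X ^ 10 + X ^ 8 + X ^ 6 + X ^ 5 + X ^ 4 + 1, ?_⟩
  rw [cyclotomic_prime _ 31]
  simp only [Finset.sum_range_succ, Finset.sum_range_zero]
  ring_nf
  reduce_mod_char

theorem orderOf_two_zmod_961 : orderOf (2 : ZMod 961) = 155 := by
  refine orderOf_eq_of_pow_and_pow_div_prime (by norm_num) (by reduce_mod_char) fun p hp hp155 ↦ ?_
  obtain rfl | rfl : p = 5 ∨ p = 31 := by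
    rcases (Nat.Prime.dvd_mul hp).mp (show p ∣ 5 * 31 from hp155) with h | h
    · exact .inl ((Nat.prime_dvd_prime_iff_eq hp (by norm_num)).mp h)
    · exact .inr ((Nat.prime_dvd_prime_iff_eq hp (by norm_num)).mp h)
  all_goals reduce_mod_char; decide

theorem stmt5 :
    Irreducible (X ^ 155 + X ^ 93 + X ^ 62 + X ^ 31 + 1 : Polynomial (ZMod 2)) := by
  have hexpand : (X ^ 155 + X ^ 93 + X ^ 62 + X ^ 31 + 1 : (ZMod 2)[X]) =
      expand (ZMod 2) 31 (X ^ 5 + X ^ 3 + X ^ 2 + X + 1) := by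
    simp [← pow_mul]
  have hdvd : (X ^ 155 + X ^ 93 + X ^ 62 + X ^ 31 + 1 : (ZMod 2)[X]) ∣
      cyclotomic (31 * 31) (ZMod 2) :=
    hexpand ▸ expand_dvd_cyclotomic_mul (by norm_num) dvd_rfl quintic_dvd_cyclotomic_31
  refine ZMod.irreducible_of_dvd_cyclotomic_of_natDegree (p := 2) (by norm_num) hdvd ?_
  rw [← orderOf_units, ZMod.coe_unitOfCoprime, Nat.cast_ofNat, orderOf_two_zmod_961]
  compute_degree!
end

section
/- Let b > 1, m = 2b + 1, and f(x) = x^{2b+1} + x^{b+1} + x^b + x + 1 over F_2. For any polynomial D_0 = Σ_{i=0}^{2m-2} d_i x^i over F_2 of degree at most 2m - 2, the polynomial D_red defined by Equation (a) below satisfies D_red ≡ D_0 (mod f) and deg D_red < m. Equation (a): D_red = Σ_{i=0}^{2b} d_i x^i + Σ_{i=b+1}^{2b} d_{i+b} x^i + Σ_{i=1}^{b} d_{i+2b} x^i + Σ_{i=1}^{b} d_{i+3b} x^i + Σ_{i=b}^{2b} d_{i+b+1} x^i + Σ_{i=0}^{b-1} d_{i+2b+1} x^i + Σ_{i=b+1}^{2b-1}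 d_{i+2b+1} x^i + Σ_{i=b}^{2b-2} d_{i+2b+2} x^i + Σ_{i=0}^{b-2} d_{i+3b+2} x^i + d_{3b+1}. -/
open Polynomial

lemma sum_Icc_shift {M : Type*} [AddCommMonoid M] (g : ℕ → M) (t L : ℕ) :
    ∑ i ∈ Finset.Icc t (L + t), g i = ∑ k ∈ Finset.Icc 0 L, g (k + t) := by
  have h : Finset.Icc t (L+t) = (Finset.Icc 0 L).map (addRightEmbedding t) := by
    rw [Finset.map_add_right_Icc]; congr 1; omega
  rw [h, Finset.sum_map]; simp [addRightEmbedding]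

lemma sum_Icc_split {M : Type*} [AddCommMonoid M] (g : ℕ → M) (a c e : ℕ)
    (hac : a ≤ c + 1) (hce : c ≤ e) :
    ∑ i ∈ Finset.Icc a e, g i = ∑ i ∈ Finset.Icc a c, g i + ∑ i ∈ Finset.Icc (c+1) e, g i := by
  rw [← Finset.sum_union (by
    refine Finset.disjoint_left.mpr fun x hx hx' => ?_
    simp only [Finset.mem_Icc] at hx hx'; omega)]
  congr 1
  ext x; simp only [Finset.mem_Icc, Finset.mem_union]; omega

lemma term_congr (d : ℕ → ZMod 2) {e1 c1 e2 c2 : ℕ} (h1 : e1 = c1) (h2 : e2 = c2) :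
    C (d e1) * X ^ e2 = C (d c1) * X ^ c2 := by rw [h1, h2]

lemma htwo : (2 : Polynomial (ZMod 2)) = 0 := by
  have := CharP.cast_eq_zero (Polynomial (ZMod 2)) 2
  simpa using this

lemma key_c (b k : ℕ) (a : ZMod 2) :
    C a * X^(k+3*b+2) + C a * X^(k+b+1) + C a * X^(k+2) + C a * X^(k+b) + C a * X^k
    = ((X : Polynomial (ZMod 2))^(2*b+1) + X^(b+1) + X^b + X + 1) *
      (C a * (X^(k+b+1)+X^(k+1)+X^k)) := by
  linear_combination (-(C a * (X^(k+2*b+2)+X^(k+2*b+1)+X^(k+b+2)+X^(k+b+1)+X^(k+1))) :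
    Polynomial (ZMod 2)) * htwo

lemma key_b (b : ℕ) (a : ZMod 2) :
    C a * X^(3*b+1) + C a * X^(2*b) + C a * X^1 + C a
    = ((X : Polynomial (ZMod 2))^(2*b+1) + X^(b+1) + X^b + X + 1) * (C a * (X^b+1)) := by
  linear_combination (-(C a * (X^(2*b+1)+X^(b+1)+X^b)) : Polynomial (ZMod 2)) * htwo

lemma deg_bound (b : ℕ) (s : Finset ℕ) (hs : ∀ i ∈ s, i ≤ 2*b) (c : ℕ → ZMod 2) :
    (∑ i ∈ s, C (c i) * X ^ i).degree < ((2*b+1 : ℕ) : WithBot ℕ) := by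
  refine lt_of_le_of_lt (degree_sum_le _ _) ?_
  rw [Finset.sup_lt_iff (by exact_mod_cast WithBot.bot_lt_coe _)]
  intro i hi
  refine lt_of_le_of_lt (degree_C_mul_X_pow_le _ _) ?_
  exact_mod_cast Nat.lt_succ_of_le (hs i hi)

lemma deg_add_lt {p q : Polynomial (ZMod 2)} {n : WithBot ℕ}
    (hp : p.degree < n) (hq : q.degree < n) : (p+q).degree < n :=
  lt_of_le_of_lt (degree_add_le p q) (max_lt hp hq)

theorem stmt10 (b : ℕ) (hb : 1 < b) (d : ℕ → ZMod 2) :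
    let m := 2*b+1
    let f : Polynomial (ZMod 2) := X ^ (2*b+1) + X ^ (b+1) + X ^ b + X + 1
    let D0 : Polynomial (ZMod 2) := ∑ i ∈ Finset.range (2*m - 1), C (d i) * X ^ i
    let Dred : Polynomial (ZMod 2) :=
      (∑ i ∈ Finset.Icc 0 (2*b), C (d i) * X ^ i) +
      (∑ i ∈ Finset.Icc (b+1) (2*b), C (d (i+b)) * X ^ i) +
      (∑ i ∈ Finset.Icc 1 b, C (d (i+2*b)) * X ^ i) +
      (∑ i ∈ Finset.Icc 1 b, C (d (i+3*b)) * X ^ i) +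
      (∑ i ∈ Finset.Icc b (2*b), C (d (i+b+1)) * X ^ i) +
      (∑ i ∈ Finset.Icc 0 (b-1), C (d (i+2*b+1)) * X ^ i) +
      (∑ i ∈ Finset.Icc (b+1) (2*b-1), C (d (i+2*b+1)) * X ^ i) +
      (∑ i ∈ Finset.Icc b (2*b-2), C (d (i+2*b+2)) * X ^ i) +
      (∑ i ∈ Finset.Icc 0 (b-2), C (d (i+3*b+2)) * X ^ i) +
      C (d (3*b+1))
    f ∣ (Dred - D0) ∧ Dred.degree < ((m : ℕ) : WithBot ℕ) := by
  intro m f D0 Dred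
  constructor
  · refine ⟨(∑ i ∈ Finset.Icc 0 (b-1), C (d (i+2*b+1)) * X ^ i) +
      C (d (3*b+1)) * (X^b+1) +
      (∑ i ∈ Finset.Icc 0 (b-2), C (d (i+3*b+2)) * (X^(i+b+1)+X^(i+1)+X^i)), ?_⟩
    show (∑ i ∈ Finset.Icc 0 (2*b), C (d i) * X ^ i) +
      (∑ i ∈ Finset.Icc (b+1) (2*b), C (d (i+b)) * X ^ i) +
      (∑ i ∈ Finset.Icc 1 b, C (d (i+2*b)) * X ^ i) +
      (∑ i ∈ Finset.Icc 1 b, C (d (i+3*b)) * X ^ i) +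
      (∑ i ∈ Finset.Icc b (2*b), C (d (i+b+1)) * X ^ i) +
      (∑ i ∈ Finset.Icc 0 (b-1), C (d (i+2*b+1)) * X ^ i) +
      (∑ i ∈ Finset.Icc (b+1) (2*b-1), C (d (i+2*b+1)) * X ^ i) +
      (∑ i ∈ Finset.Icc b (2*b-2), C (d (i+2*b+2)) * X ^ i) +
      (∑ i ∈ Finset.Icc 0 (b-2), C (d (i+3*b+2)) * X ^ i) +
      C (d (3*b+1)) -
      (∑ i ∈ Finset.range (2*(2*b+1) - 1), C (d i) * X ^ i)
      = (X ^ (2*b+1) + X ^ (b+1) + X ^ b + X + 1) * _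
    rw [CharTwo.sub_eq_add]
    -- convert each sum to canonical form
    have h2 : (∑ i ∈ Finset.Icc (b+1) (2*b), C (d (i+b)) * X ^ i)
        = ∑ k ∈ Finset.Icc 0 (b-1), C (d (k+2*b+1)) * X ^ (k+b+1) := by
      have e : Finset.Icc (b+1) (2*b) = Finset.Icc (b+1) ((b-1)+(b+1)) := by congr 1; omega
      rw [e, sum_Icc_shift (fun i => C (d (i+b)) * X ^ i) (b+1) (b-1)]
      exact Finset.sum_congr rfl fun k _ => term_congr d (by omega) (by omega)
    have h3 : (∑ i ∈ Finset.Icc 1 b, C (d (i+2*b)) * X ^ i)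
        = ∑ k ∈ Finset.Icc 0 (b-1), C (d (k+2*b+1)) * X ^ (k+1) := by
      have e : Finset.Icc 1 b = Finset.Icc 1 ((b-1)+1) := by congr 1; omega
      rw [e, sum_Icc_shift (fun i => C (d (i+2*b)) * X ^ i) 1 (b-1)]
      exact Finset.sum_congr rfl fun k _ => term_congr d (by omega) (by omega)
    have h4 : (∑ i ∈ Finset.Icc 1 b, C (d (i+3*b)) * X ^ i)
        = C (d (3*b+1)) * X ^ 1
          + ∑ k ∈ Finset.Icc 0 (b-2), C (d (k+3*b+2)) * X ^ (k+2) := by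
      rw [sum_Icc_split (fun i => C (d (i+3*b)) * X ^ i) 1 1 b (by omega) (by omega)]
      congr 1
      · rw [Finset.Icc_self, Finset.sum_singleton]
        exact term_congr d (by omega) rfl
      · have e : Finset.Icc (1+1) b = Finset.Icc 2 ((b-2)+2) := by congr 1 <;> omega
        rw [e, sum_Icc_shift (fun i => C (d (i+3*b)) * X ^ i) 2 (b-2)]
        exact Finset.sum_congr rfl fun k _ => term_congr d (by omega) (by omega)
    have h5 : (∑ i ∈ Finset.Icc b (2*b), C (d (i+b+1)) * X ^ i)
        = (∑ k ∈ Finset.Icc 0 (b-1), C (d (k+2*b+1)) * X ^ (k+b))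
          + C (d (3*b+1)) * X ^ (2*b) := by
      rw [sum_Icc_split (fun i => C (d (i+b+1)) * X ^ i) b (2*b-1) (2*b) (by omega) (by omega)]
      congr 1
      · have e : Finset.Icc b (2*b-1) = Finset.Icc b ((b-1)+b) := by congr 1; omega
        rw [e, sum_Icc_shift (fun i => C (d (i+b+1)) * X ^ i) b (b-1)]
        exact Finset.sum_congr rfl fun k _ => term_congr d (by omega) (by omega)
      · have e : Finset.Icc (2*b-1+1) (2*b) = Finset.Icc (2*b) (2*b) := by congr 1; omega
        rw [e, Finset.Icc_self, Finset.sum_singleton]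
        exact term_congr d (by omega) rfl
    have h7 : (∑ i ∈ Finset.Icc (b+1) (2*b-1), C (d (i+2*b+1)) * X ^ i)
        = ∑ k ∈ Finset.Icc 0 (b-2), C (d (k+3*b+2)) * X ^ (k+b+1) := by
      have e : Finset.Icc (b+1) (2*b-1) = Finset.Icc (b+1) ((b-2)+(b+1)) := by congr 1; omega
      rw [e, sum_Icc_shift (fun i => C (d (i+2*b+1)) * X ^ i) (b+1) (b-2)]
      exact Finset.sum_congr rfl fun k _ => term_congr d (by omega) (by omega)
    have h8 : (∑ i ∈ Finset.Icc b (2*b-2), C (d (i+2*b+2)) * X ^ i)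
        = ∑ k ∈ Finset.Icc 0 (b-2), C (d (k+3*b+2)) * X ^ (k+b) := by
      have e : Finset.Icc b (2*b-2) = Finset.Icc b ((b-2)+b) := by congr 1; omega
      rw [e, sum_Icc_shift (fun i => C (d (i+2*b+2)) * X ^ i) b (b-2)]
      exact Finset.sum_congr rfl fun k _ => term_congr d (by omega) (by omega)
    have hD0 : (∑ i ∈ Finset.range (2*(2*b+1) - 1), C (d i) * X ^ i)
        = (∑ i ∈ Finset.Icc 0 (2*b), C (d i) * X ^ i)
          + (∑ k ∈ Finset.Icc 0 (b-1), C (d (k+2*b+1)) * X ^ (k+2*b+1))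
          + C (d (3*b+1)) * X ^ (3*b+1)
          + (∑ k ∈ Finset.Icc 0 (b-2), C (d (k+3*b+2)) * X ^ (k+3*b+2)) := by
      have e0 : Finset.range (2*(2*b+1) - 1) = Finset.Icc 0 (4*b) := by
        ext x; simp only [Finset.mem_range, Finset.mem_Icc]; omega
      rw [e0, sum_Icc_split (fun i => C (d i) * X ^ i) 0 (2*b) (4*b) (by omega) (by omega)]
      rw [sum_Icc_split (fun i => C (d i) * X ^ i) (2*b+1) (3*b) (4*b) (by omega) (by omega)]
      rw [sum_Icc_split (fun i => C (d i) * X ^ i) (3*b+1) (3*b+1) (4*b) (by omega) (by omega)]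
      rw [Finset.Icc_self, Finset.sum_singleton]
      have e1 : Finset.Icc (2*b+1) (3*b) = Finset.Icc (2*b+1) ((b-1)+(2*b+1)) := by
        congr 1; omega
      have e2 : Finset.Icc (3*b+1+1) (4*b) = Finset.Icc (3*b+2) ((b-2)+(3*b+2)) := by
        congr 1 <;> omega
      rw [e1, sum_Icc_shift (fun i => C (d i) * X ^ i) (2*b+1) (b-1)]
      rw [e2, sum_Icc_shift (fun i => C (d i) * X ^ i) (3*b+2) (b-2)]
      have c1 : (∑ k ∈ Finset.Icc 0 (b-1), C (d (k+(2*b+1))) * X ^ (k+(2*b+1)))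
          = ∑ k ∈ Finset.Icc 0 (b-1), C (d (k+2*b+1)) * X ^ (k+2*b+1) :=
        Finset.sum_congr rfl fun k _ => term_congr d (by omega) (by omega)
      have c2 : (∑ k ∈ Finset.Icc 0 (b-2), C (d (k+(3*b+2))) * X ^ (k+(3*b+2)))
          = ∑ k ∈ Finset.Icc 0 (b-2), C (d (k+3*b+2)) * X ^ (k+3*b+2) :=
        Finset.sum_congr rfl fun k _ => term_congr d (by omega) (by omega)
      rw [c1, c2]
      ring
    rw [h2, h3, h4, h5, h7, h8, hD0]
    have hA2 : (∑ k ∈ Finset.Icc 0 (b-1), C (d (k+2*b+1)) * X ^ (k+2*b+1))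
        + (∑ k ∈ Finset.Icc 0 (b-1), C (d (k+2*b+1)) * X ^ (k+b+1))
        + (∑ k ∈ Finset.Icc 0 (b-1), C (d (k+2*b+1)) * X ^ (k+b))
        + (∑ k ∈ Finset.Icc 0 (b-1), C (d (k+2*b+1)) * X ^ (k+1))
        + (∑ k ∈ Finset.Icc 0 (b-1), C (d (k+2*b+1)) * X ^ k)
        = (X ^ (2*b+1) + X ^ (b+1) + X ^ b + X + 1) *
          ∑ i ∈ Finset.Icc 0 (b-1), C (d (i+2*b+1)) * X ^ i := by
      rw [Finset.mul_sum, ← Finset.sum_add_distrib, ← Finset.sum_add_distrib,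
        ← Finset.sum_add_distrib, ← Finset.sum_add_distrib]
      exact Finset.sum_congr rfl fun k _ => by ring
    have hC2 : (∑ k ∈ Finset.Icc 0 (b-2), C (d (k+3*b+2)) * X ^ (k+3*b+2))
        + (∑ k ∈ Finset.Icc 0 (b-2), C (d (k+3*b+2)) * X ^ (k+b+1))
        + (∑ k ∈ Finset.Icc 0 (b-2), C (d (k+3*b+2)) * X ^ (k+2))
        + (∑ k ∈ Finset.Icc 0 (b-2), C (d (k+3*b+2)) * X ^ (k+b))
        + (∑ k ∈ Finset.Icc 0 (b-2), C (d (k+3*b+2)) * X ^ k)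
        = (X ^ (2*b+1) + X ^ (b+1) + X ^ b + X + 1) *
          ∑ i ∈ Finset.Icc 0 (b-2), C (d (i+3*b+2)) * (X^(i+b+1)+X^(i+1)+X^i) := by
      rw [Finset.mul_sum, ← Finset.sum_add_distrib, ← Finset.sum_add_distrib,
        ← Finset.sum_add_distrib, ← Finset.sum_add_distrib]
      exact Finset.sum_congr rfl fun k _ => key_c b k _
    have hB2 : C (d (3*b+1)) * X ^ (3*b+1) + C (d (3*b+1)) * X ^ (2*b)
        + C (d (3*b+1)) * X ^ 1 + C (d (3*b+1))
        = (X ^ (2*b+1) + X ^ (b+1) + X ^ b + X + 1) * (C (d (3*b+1)) * (X^b+1)) :=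
      key_b b _
    have hS : (∑ i ∈ Finset.Icc 0 (2*b), C (d i) * X ^ i)
        + (∑ i ∈ Finset.Icc 0 (2*b), C (d i) * X ^ i) = 0 :=
      CharTwo.add_self_eq_zero _
    linear_combination hA2 + hB2 + hC2 + hS
  · show Dred.degree < ((2*b+1 : ℕ) : WithBot ℕ)
    have hC : (C (d (3*b+1)) : Polynomial (ZMod 2)).degree < ((2*b+1 : ℕ) : WithBot ℕ) := by
      refine lt_of_le_of_lt degree_C_le ?_
      exact_mod_cast Nat.succ_pos (2*b)
    refine deg_add_lt (deg_add_lt (deg_add_lt (deg_add_lt (deg_add_lt (deg_add_lt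
      (deg_add_lt (deg_add_lt (deg_add_lt ?_ ?_) ?_) ?_) ?_) ?_) ?_) ?_) ?_) hC <;>
      refine deg_bound b _ (fun i hi => ?_) _ <;>
      simp only [Finset.mem_Icc] at hi <;> omega
end

section
/- Let b > c > 1 and f(x) = x^{2b+c} + x^{b+c} + x^b + x^c + 1 over F_2 with m = 2b + c. For any polynomial D_0 = Σ_{i=0}^{2m-2} d_i x^i over F_2 of degree at most 2m - 2, the polynomial D_red = Σ_{i=0}^{2b+c-1} d_i x^i + Σ_{i=b+c}^{2b+c-1} d_{i+b} x^i + Σ_{i=c}^{b+c-1} d_{i+2b} x^i + Σ_{i=c}^{b+2c-2} d_{i+3b} x^i + Σ_{i=b}^{2b+c-1} d_{i+b+c} x^i + Σ_{i=0}^{b-1} d_{i+2b+c} x^i + Σ_{i=b+c}^{2b+c-2} d_{i+2b+c} x^i + Σ_{i=b}^{2b-2} d_{i+2b+2c} x^i + Σ_{i=0}^{c-1} d_{i+3b+c} x^i + Σ_{i=0}^{b-2} d_{i+3b+2c} x^i satisfies D_red ≡ D_0 (mod f) and deg D_red < m. -/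
/-!
Reduction modulo `f` is linear in the coefficients, so it is enough to know the remainder
`r j` of each monomial `X ^ j` with `j ≤ 2m - 2`. Regrouping the ten sums of `D_red` by the
index of `d_j` gives `D_red = ∑ d_j r j`, where `r j = X ^ j` for `j < m` and otherwise `r j`
is the sum of three or four monomials obtained by substituting
`X ^ m = X ^ (b + c) + X ^ b + X ^ c + 1` into `X ^ j` until the degree drops below `m`.
Each `r j - X ^ j` is an explicit multiple of `f` in characteristic two, and each `r j` has
degree `< m` as soon as `c ≤ b + 1`.
-/

open Polynomial Finset

section Semiring

variable {R : Type*} [Semiring R]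

noncomputable def pentanomial (b c : ℕ) : R[X] :=
  X ^ (2*b+c) + X ^ (b+c) + X ^ b + X ^ c + 1

noncomputable def window (d : ℕ → R) (a lo hi : ℕ) : R[X] :=
  ∑ i ∈ Icc lo hi, C (d (i + a)) * X ^ i

noncomputable def pentanomialReduction (b c : ℕ) (d : ℕ → R) : R[X] :=
  window d 0 0 (2*b+c-1) + window d b (b+c) (2*b+c-1) + window d (2*b) c (b+c-1) +
    window d (3*b) c (b+2*c-2) + window d (b+c) b (2*b+c-1) + window d (2*b+c) 0 (b-1) +
    window d (2*b+c) (b+c) (2*b+c-2) + window d (2*b+2*c) b (2*b-2) +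
    window d (3*b+c) 0 (c-1) + window d (3*b+2*c) 0 (b-2)

noncomputable def pentanomialRem (b c j : ℕ) : R[X] :=
  if j < 2*b+c then X ^ j
  else if j < 3*b+c then X ^ (j-b) + X ^ (j-2*b) + X ^ (j-(b+c)) + X ^ (j-(2*b+c))
  else if j < 3*b+2*c then X ^ (j-3*b) + X ^ (j-(b+c)) + X ^ (j-(3*b+c))
  else X ^ (j-3*b) + X ^ (j-(2*b+c)) + X ^ (j-(2*b+2*c)) + X ^ (j-(3*b+2*c))

theorem window_eq_sum_range_ite (d : ℕ → R) {a lo hi N : ℕ} (h : hi + a < N) :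
    window d a lo hi =
      ∑ j ∈ range N, C (d j) * if j ∈ Icc (lo + a) (hi + a) then X ^ (j - a) else 0 := by
  have hsub : Icc (lo + a) (hi + a) ⊆ range N := fun j hj => by
    simp only [mem_Icc, mem_range] at hj ⊢
    omega
  simp only [mul_ite, mul_zero]
  rw [window, ← sum_filter, filter_mem_eq_inter, inter_eq_right.2 hsub, ← map_add_right_Icc,
    sum_map]
  simp only [addRightEmbedding_apply, Nat.add_sub_cancel]

theorem pentanomialReduction_eq_sum (d : ℕ → R) {b c : ℕ} (hb : 2 ≤ b) (hc : 1 ≤ c) :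
    pentanomialReduction b c d = ∑ j ∈ range (2*(2*b+c)-1), C (d j) * pentanomialRem b c j := by
  rw [pentanomialReduction]
  simp (disch := omega) only [window_eq_sum_range_ite d (N := 2*(2*b+c)-1), ← sum_add_distrib]
  refine sum_congr rfl fun j hj => ?_
  rw [mem_range] at hj
  obtain h | ⟨h, h'⟩ | ⟨h, h'⟩ | h : j < 2*b+c ∨ (2*b+c ≤ j ∧ j < 3*b+c) ∨
    (3*b+c ≤ j ∧ j < 3*b+2*c) ∨ 3*b+2*c ≤ j := by omega
  all_goals
    simp (disch := omega) only [pentanomialRem, mem_Icc, if_pos, if_neg, mul_zero, add_zero,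
      zero_add, Nat.sub_zero, mul_add]

theorem pentanomialRem_mem_degreeLT {b c j : ℕ} (hcb : c ≤ b + 1) (hj : j < 2*(2*b+c)-1) :
    pentanomialRem b c j ∈ degreeLT R (2*b+c) := by
  have hX : ∀ {n : ℕ}, n < 2*b+c → (X ^ n : R[X]) ∈ degreeLT R (2*b+c) := fun hn =>
    mem_degreeLT.2 ((degree_X_pow_le _).trans_lt (WithBot.coe_lt_coe.2 hn))
  unfold pentanomialRem
  split_ifs <;> apply_rules [add_mem, hX] <;> omega

end Semiring

section CharTwo

variable {R : Type*} [CommRing R] [CharP R 2]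

theorem pentanomial_dvd_pentanomialRem_sub (b c j : ℕ) :
    (pentanomial b c : R[X]) ∣ pentanomialRem b c j - X ^ j := by
  have two : (2 : R[X]) = 0 := CharTwo.two_eq_zero
  rw [CharTwo.sub_eq_add, pentanomial]
  unfold pentanomialRem
  split_ifs with h₁ h₂ h₃
  · exact ⟨0, by linear_combination (X ^ j : R[X]) * two⟩
  · obtain ⟨t, rfl⟩ := Nat.exists_eq_add_of_le' (not_lt.1 h₁)
    rw [show t + (2*b+c) - b = t + (b+c) by omega, show t + (2*b+c) - 2*b = t + c by omega,
      show t + (2*b+c) - (b+c) = t + b by omega, Nat.add_sub_cancel]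
    exact ⟨X ^ t, by ring⟩
  · obtain ⟨t, rfl⟩ := Nat.exists_eq_add_of_le' (not_lt.1 h₂)
    rw [show t + (3*b+c) - 3*b = t + c by omega, show t + (3*b+c) - (b+c) = t + 2*b by omega,
      Nat.add_sub_cancel]
    exact ⟨X ^ (t + b) + X ^ t, by
      linear_combination (-(X ^ (t + 2*b + c) + X ^ (t + b + c) + X ^ (t + b)) : R[X]) * two⟩
  · obtain ⟨t, rfl⟩ := Nat.exists_eq_add_of_le' (not_lt.1 h₃)
    rw [show t + (3*b+2*c) - 3*b = t + 2*c by omega,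
      show t + (3*b+2*c) - (2*b+c) = t + b + c by omega,
      show t + (3*b+2*c) - (2*b+2*c) = t + b by omega, Nat.add_sub_cancel]
    exact ⟨X ^ t * (X ^ (b+c) + X ^ c + 1), by
      linear_combination (-(X ^ (t + c) + X ^ (t + b + c) + X ^ (t + 2*b + c) +
        X ^ (t + b + 2*c) + X ^ (t + 2*b + 2*c)) : R[X]) * two⟩

end CharTwo

theorem stmt11 (b c : ℕ) (h1 : c < b) (h2 : 1 < c) (d : ℕ → ZMod 2) :
    let m := 2*b+c
    let f : Polynomial (ZMod 2) := X ^ (2*b+c) + X ^ (b+c) + X ^ b + X ^ c + 1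
    let D0 : Polynomial (ZMod 2) := ∑ i ∈ Finset.range (2*m - 1), C (d i) * X ^ i
    let Dred : Polynomial (ZMod 2) :=
      (∑ i ∈ Finset.Icc 0 (2*b+c-1), C (d i) * X ^ i) +
      (∑ i ∈ Finset.Icc (b+c) (2*b+c-1), C (d (i+b)) * X ^ i) +
      (∑ i ∈ Finset.Icc c (b+c-1), C (d (i+2*b)) * X ^ i) +
      (∑ i ∈ Finset.Icc c (b+2*c-2), C (d (i+3*b)) * X ^ i) +
      (∑ i ∈ Finset.Icc b (2*b+c-1), C (d (i+b+c)) * X ^ i) +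
      (∑ i ∈ Finset.Icc 0 (b-1), C (d (i+2*b+c)) * X ^ i) +
      (∑ i ∈ Finset.Icc (b+c) (2*b+c-2), C (d (i+2*b+c)) * X ^ i) +
      (∑ i ∈ Finset.Icc b (2*b-2), C (d (i+2*b+2*c)) * X ^ i) +
      (∑ i ∈ Finset.Icc 0 (c-1), C (d (i+3*b+c)) * X ^ i) +
      (∑ i ∈ Finset.Icc 0 (b-2), C (d (i+3*b+2*c)) * X ^ i)
    f ∣ (Dred - D0) ∧ Dred.degree < ((m : ℕ) : WithBot ℕ) := by
  intro m f D0 Dred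
  have hDred : Dred = ∑ j ∈ range (2*m-1), C (d j) * pentanomialRem b c j := by
    rw [← pentanomialReduction_eq_sum d (by omega) (by omega)]
    simp only [Dred, pentanomialReduction, window, add_assoc, add_zero]
  refine ⟨?_, ?_⟩
  · rw [hDred, ← sum_sub_distrib]
    exact dvd_sum fun j _ => by
      rw [← mul_sub]
      exact dvd_mul_of_dvd_right (pentanomial_dvd_pentanomialRem_sub b c j) _
  · rw [hDred, ← mem_degreeLT]
    exact sum_mem fun j hj => by
      rw [C_mul']
      exact Submodule.smul_mem _ _ (pentanomialRem_mem_degreeLT (by omega) (mem_range.1 hj))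
end

section
/- Let c ≥ 1 and f(x) = x^{5c} + x^{3c} + x^{2c} + x^c + 1 over F_2, so m = 5c. For any polynomial D_0 = Σ_{i=0}^{2m-2} d_i x^i over F_2 of degree at most 2m - 2 = 10c - 2, the polynomial D_red = Σ_{i=0}^{5c-1} d_i x^i + Σ_{i=3c}^{5c-1} d_{i+2c} x^i + Σ_{i=c}^{3c-1} d_{i+4c} x^i + Σ_{i=c}^{4c-2} d_{i+6c} x^i + Σ_{i=2c}^{5c-1} d_{i+3c} x^i + Σ_{i=0}^{2c-1} d_{i+5c} x^i + Σ_{i=3c}^{5c-2} d_{i+5c} x^i + Σ_{i=2c}^{4c-2} d_{i+6c} x^i + Σ_{i=0}^{c-1} d_{i+7c} x^i + Σ_{i=0}^{2c-2} d_{i+8c} x^i satisfies D_red ≡ D_0 (mod f) and deg D_red < 5c. -/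
open Polynomial

noncomputable def Spoly (d : ℕ → ZMod 2) (a b t : ℕ) : Polynomial (ZMod 2) :=
  ∑ i ∈ Finset.Ico a b, C (d (i + t)) * X ^ i

lemma Spoly_split (d : ℕ → ZMod 2) {a m b : ℕ} (t : ℕ) (h1 : a ≤ m) (h2 : m ≤ b) :
    Spoly d a b t = Spoly d a m t + Spoly d m b t := by
  rw [Spoly, Spoly, Spoly, Finset.sum_Ico_consecutive _ h1 h2]

lemma Spoly_shift (d : ℕ → ZMod 2) (a b t e : ℕ) {a' b' t0 : ℕ}
    (ha : a' = a + e) (hb : b' = b + e) (ht : t = t0 + e) :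
    X ^ e * Spoly d a b t = Spoly d a' b' t0 := by
  subst ha hb ht
  rw [Spoly, Spoly, Finset.mul_sum]
  rw [show Finset.Ico (a + e) (b + e) = Finset.map (addLeftEmbedding e) (Finset.Ico a b) by
    rw [Finset.map_add_left_Ico]; congr 1 <;> omega]
  rw [Finset.sum_map]
  apply Finset.sum_congr rfl
  intro i _
  simp only [addLeftEmbedding_apply]
  rw [show e + i + t0 = i + (t0 + e) by ring, pow_add]
  ring

lemma Icc_eq_Spoly (d : ℕ → ZMod 2) (a b t b' : ℕ) (h : b' = b + 1) :
    (∑ i ∈ Finset.Icc a b, C (d (i + t)) * X ^ i) = Spoly d a b' t := by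
  subst h; rw [Spoly, Finset.Ico_add_one_right_eq_Icc]

lemma Icc_eq_Spoly0 (d : ℕ → ZMod 2) (a b b' : ℕ) (h : b' = b + 1) :
    (∑ i ∈ Finset.Icc a b, C (d i) * X ^ i) = Spoly d a b' 0 := by
  subst h; rw [Spoly, Finset.Ico_add_one_right_eq_Icc]; simp

lemma range_eq_Spoly (d : ℕ → ZMod 2) (n : ℕ) :
    (∑ i ∈ Finset.range n, C (d i) * X ^ i) = Spoly d 0 n 0 := by
  rw [Spoly, Finset.range_eq_Ico]; simp

theorem stmt12 (c : ℕ) (hc : 0 < c) (d : ℕ → ZMod 2) :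
    let f : Polynomial (ZMod 2) := X ^ (5*c) + X ^ (3*c) + X ^ (2*c) + X ^ c + 1
    let D0 : Polynomial (ZMod 2) := ∑ i ∈ Finset.range (10*c - 1), C (d i) * X ^ i
    let Dred : Polynomial (ZMod 2) :=
      (∑ i ∈ Finset.Icc 0 (5*c-1), C (d i) * X ^ i) +
      (∑ i ∈ Finset.Icc (3*c) (5*c-1), C (d (i+2*c)) * X ^ i) +
      (∑ i ∈ Finset.Icc c (3*c-1), C (d (i+4*c)) * X ^ i) +
      (∑ i ∈ Finset.Icc c (4*c-2), C (d (i+6*c)) * X ^ i) +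
      (∑ i ∈ Finset.Icc (2*c) (5*c-1), C (d (i+3*c)) * X ^ i) +
      (∑ i ∈ Finset.Icc 0 (2*c-1), C (d (i+5*c)) * X ^ i) +
      (∑ i ∈ Finset.Icc (3*c) (5*c-2), C (d (i+5*c)) * X ^ i) +
      (∑ i ∈ Finset.Icc (2*c) (4*c-2), C (d (i+6*c)) * X ^ i) +
      (∑ i ∈ Finset.Icc 0 (c-1), C (d (i+7*c)) * X ^ i) +
      (∑ i ∈ Finset.Icc 0 (2*c-2), C (d (i+8*c)) * X ^ i)
    f ∣ (Dred - D0) ∧ Dred.degree < ((5*c : ℕ) : WithBot ℕ) := by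
  intro f D0 Dred
  have hf : f = X ^ (5*c) + X ^ (3*c) + X ^ (2*c) + X ^ c + 1 := rfl
  have hD0 : D0 = ∑ i ∈ Finset.range (10*c - 1), C (d i) * X ^ i := rfl
  have hDr : Dred =
      (∑ i ∈ Finset.Icc 0 (5*c-1), C (d i) * X ^ i) +
      (∑ i ∈ Finset.Icc (3*c) (5*c-1), C (d (i+2*c)) * X ^ i) +
      (∑ i ∈ Finset.Icc c (3*c-1), C (d (i+4*c)) * X ^ i) +
      (∑ i ∈ Finset.Icc c (4*c-2), C (d (i+6*c)) * X ^ i) +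
      (∑ i ∈ Finset.Icc (2*c) (5*c-1), C (d (i+3*c)) * X ^ i) +
      (∑ i ∈ Finset.Icc 0 (2*c-1), C (d (i+5*c)) * X ^ i) +
      (∑ i ∈ Finset.Icc (3*c) (5*c-2), C (d (i+5*c)) * X ^ i) +
      (∑ i ∈ Finset.Icc (2*c) (4*c-2), C (d (i+6*c)) * X ^ i) +
      (∑ i ∈ Finset.Icc 0 (c-1), C (d (i+7*c)) * X ^ i) +
      (∑ i ∈ Finset.Icc 0 (2*c-2), C (d (i+8*c)) * X ^ i) := rfl
  constructor
  · -- divisibility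
    refine ⟨Spoly d 0 (5*c-1) (5*c) + Spoly d 0 (3*c-1) (7*c) + Spoly d 0 (2*c-1) (8*c), ?_⟩
    rw [hDr, hD0, hf]
    rw [Icc_eq_Spoly0 d 0 (5*c-1) (5*c) (by omega),
        Icc_eq_Spoly d (3*c) (5*c-1) (2*c) (5*c) (by omega),
        Icc_eq_Spoly d c (3*c-1) (4*c) (3*c) (by omega),
        Icc_eq_Spoly d c (4*c-2) (6*c) (4*c-1) (by omega),
        Icc_eq_Spoly d (2*c) (5*c-1) (3*c) (5*c) (by omega),
        Icc_eq_Spoly d 0 (2*c-1) (5*c) (2*c) (by omega),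
        Icc_eq_Spoly d (3*c) (5*c-2) (5*c) (5*c-1) (by omega),
        Icc_eq_Spoly d (2*c) (4*c-2) (6*c) (4*c-1) (by omega),
        Icc_eq_Spoly d 0 (c-1) (7*c) c (by omega),
        Icc_eq_Spoly d 0 (2*c-2) (8*c) (2*c-1) (by omega),
        range_eq_Spoly d (10*c-1)]
    have h2 : (2 : Polynomial (ZMod 2)) = 0 := by
      have h21 : (2 : Polynomial (ZMod 2)) = C 1 + C 1 := by rw [C_1]; ring
      rw [h21, ← C_add, show (1 : ZMod 2) + 1 = 0 from by decide, C_0]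
    have s1 : X ^ (5*c) * Spoly d 0 (5*c-1) (5*c) = Spoly d (5*c) (10*c-1) 0 :=
      Spoly_shift d 0 (5*c-1) (5*c) (5*c) (by omega) (by omega) (by omega)
    have s2 : X ^ (3*c) * Spoly d 0 (5*c-1) (5*c) = Spoly d (3*c) (8*c-1) (2*c) :=
      Spoly_shift d 0 (5*c-1) (5*c) (3*c) (by omega) (by omega) (by omega)
    have s3 : X ^ (2*c) * Spoly d 0 (5*c-1) (5*c) = Spoly d (2*c) (7*c-1) (3*c) :=
      Spoly_shift d 0 (5*c-1) (5*c) (2*c) (by omega) (by omega) (by omega)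
    have s4 : X ^ c * Spoly d 0 (5*c-1) (5*c) = Spoly d c (6*c-1) (4*c) :=
      Spoly_shift d 0 (5*c-1) (5*c) c (by omega) (by omega) (by omega)
    have s6 : X ^ (5*c) * Spoly d 0 (3*c-1) (7*c) = Spoly d (5*c) (8*c-1) (2*c) :=
      Spoly_shift d 0 (3*c-1) (7*c) (5*c) (by omega) (by omega) (by omega)
    have s7 : X ^ (3*c) * Spoly d 0 (3*c-1) (7*c) = Spoly d (3*c) (6*c-1) (4*c) :=
      Spoly_shift d 0 (3*c-1) (7*c) (3*c) (by omega) (by omega) (by omega)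
    have s8 : X ^ (2*c) * Spoly d 0 (3*c-1) (7*c) = Spoly d (2*c) (5*c-1) (5*c) :=
      Spoly_shift d 0 (3*c-1) (7*c) (2*c) (by omega) (by omega) (by omega)
    have s9 : X ^ c * Spoly d 0 (3*c-1) (7*c) = Spoly d c (4*c-1) (6*c) :=
      Spoly_shift d 0 (3*c-1) (7*c) c (by omega) (by omega) (by omega)
    have s11 : X ^ (5*c) * Spoly d 0 (2*c-1) (8*c) = Spoly d (5*c) (7*c-1) (3*c) :=
      Spoly_shift d 0 (2*c-1) (8*c) (5*c) (by omega) (by omega) (by omega)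
    have s12 : X ^ (3*c) * Spoly d 0 (2*c-1) (8*c) = Spoly d (3*c) (5*c-1) (5*c) :=
      Spoly_shift d 0 (2*c-1) (8*c) (3*c) (by omega) (by omega) (by omega)
    have s13 : X ^ (2*c) * Spoly d 0 (2*c-1) (8*c) = Spoly d (2*c) (4*c-1) (6*c) :=
      Spoly_shift d 0 (2*c-1) (8*c) (2*c) (by omega) (by omega) (by omega)
    have s14 : X ^ c * Spoly d 0 (2*c-1) (8*c) = Spoly d c (3*c-1) (7*c) :=
      Spoly_shift d 0 (2*c-1) (8*c) c (by omega) (by omega) (by omega)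
    have A1 : Spoly d (3*c) (8*c-1) (2*c)
        = Spoly d (3*c) (5*c) (2*c) + Spoly d (5*c) (8*c-1) (2*c) :=
      Spoly_split d (2*c) (by omega) (by omega)
    have A2 : Spoly d (2*c) (7*c-1) (3*c)
        = Spoly d (2*c) (5*c) (3*c) + Spoly d (5*c) (7*c-1) (3*c) :=
      Spoly_split d (3*c) (by omega) (by omega)
    have A3 : Spoly d c (6*c-1) (4*c)
        = Spoly d c (3*c) (4*c) + Spoly d (3*c) (6*c-1) (4*c) :=
      Spoly_split d (4*c) (by omega) (by omega)
    have A4 : Spoly d 0 (5*c-1) (5*c)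
        = Spoly d 0 (2*c) (5*c) + Spoly d (2*c) (5*c-1) (5*c) :=
      Spoly_split d (5*c) (by omega) (by omega)
    have A5 : Spoly d 0 (3*c-1) (7*c)
        = Spoly d 0 c (7*c) + Spoly d c (3*c-1) (7*c) :=
      Spoly_split d (7*c) (by omega) (by omega)
    have A6 : Spoly d 0 (10*c-1) 0
        = Spoly d 0 (5*c) 0 + Spoly d (5*c) (10*c-1) 0 :=
      Spoly_split d 0 (by omega) (by omega)
    linear_combination
      (-(s1+s2+s3+s4+s6+s7+s8+s9+s11+s12+s13+s14)) - A6 + A1+A2+A3+A4+A5 +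
      (Spoly d 0 (2*c) (5*c) - Spoly d 0 (3*c-1) (7*c) - Spoly d 0 (5*c-1) (5*c)
       + Spoly d 0 c (7*c) + Spoly d (2*c) (5*c) (3*c) - Spoly d (2*c) (7*c-1) (3*c)
       + Spoly d (3*c) (5*c) (2*c) - Spoly d (3*c) (8*c-1) (2*c)
       - Spoly d (5*c) (10*c-1) 0 + Spoly d c (3*c) (4*c) - Spoly d c (6*c-1) (4*c)) * h2
  · -- degree bound
    have key : ∀ (g : ℕ → ZMod 2) (a b : ℕ), b < 5*c →
        (∑ i ∈ Finset.Icc a b, C (g i) * X ^ i) ∈ degreeLT (ZMod 2) (5*c) := by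
      intro g a b hb
      rw [mem_degreeLT]
      refine lt_of_le_of_lt (degree_sum_le _ _) ?_
      rw [Finset.sup_lt_iff (by exact_mod_cast WithBot.bot_lt_coe _)]
      intro i hi
      refine lt_of_le_of_lt (degree_C_mul_X_pow_le _ _) ?_
      exact_mod_cast Nat.lt_of_le_of_lt (Finset.mem_Icc.mp hi).2 hb
    rw [← mem_degreeLT, hDr]
    refine Submodule.add_mem _ (Submodule.add_mem _ (Submodule.add_mem _ (Submodule.add_mem _
      (Submodule.add_mem _ (Submodule.add_mem _ (Submodule.add_mem _ (Submodule.add_mem _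
      (Submodule.add_mem _ ?_ ?_) ?_) ?_) ?_) ?_) ?_) ?_) ?_) ?_
    all_goals refine key _ _ _ ?_
    all_goals omega
end

section
/- Let b > c > 0, m = 2b + c, a = b + c, and f = x^m + x^a + x^b + x^c + 1 over F_2. With A_1 = Σ_{i=m}^{m+a-2} d_{i+(m-a)} x^i + Σ_{i=m}^{m+b-2} d_{i+(m-b)} x^i + Σ_{i=m}^{m+c-2} d_{i+(m-c)} x^i (for arbitrary d_j ∈ F_2), the polynomial A_2 obtained by one further reduction step applied to A_1 (replacing each x^{m+i} by x^{i+a} + x^{i+b} + x^{i+c} + x^i and keeping only the part of degree ≥ m) equals Σ_{i=m}^{2a-2} d_{i+2m-2a} x^i; in particular deg A_2 ≤ 2a - 2 = 2b + 2c - 2 < m + a - 2. -/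
open Polynomial

namespace Polynomial

variable {R : Type*}

theorem coeff_sum_C_mul_X_pow [Semiring R] (s : Finset ℕ) (e : ℕ → R) (j : ℕ) :
    (∑ i ∈ s, C (e i) * X ^ i).coeff j = if j ∈ s then e j else 0 := by
  simp only [finsetSum_coeff, coeff_C_mul_X_pow]
  exact Finset.sum_ite_eq s j e

theorem degree_sum_Icc_C_mul_X_pow_le [Semiring R] (m n : ℕ) (e : ℕ → R) :
    (∑ i ∈ Finset.Icc m n, C (e i) * X ^ i).degree ≤ (n : WithBot ℕ) := by
  refine (degree_le_iff_coeff_zero _ (n : WithBot ℕ)).mpr fun j hj => ?_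
  rw [coeff_sum_C_mul_X_pow, if_neg]
  rw [Finset.mem_Icc, not_and, not_le]
  exact fun _ => mod_cast hj

theorem coeff_sub_sum_range_C_mul_X_pow [Ring R] (p : R[X]) (m j : ℕ) :
    (p - ∑ i ∈ Finset.range m, C (p.coeff i) * X ^ i).coeff j =
      if m ≤ j then p.coeff j else 0 := by
  rw [coeff_sub, coeff_sum_C_mul_X_pow]
  by_cases hj : m ≤ j
  · rw [if_neg (by rw [Finset.mem_range]; omega), if_pos hj, sub_zero]
  · rw [if_pos (by rw [Finset.mem_range]; omega), if_neg hj, sub_self]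

-- For `i ≤ N` the exponents `i - m + b`, `i - m + c` and `i - m` are all `< m`,
-- so in degrees `≥ m` only `X ^ (i - m + a)` contributes.
theorem coeff_sum_Icc_reduction_of_le [Semiring R] {m N a b c j : ℕ} (e : ℕ → R)
    (hb : N + b < 2 * m) (hc : N + c < 2 * m) (hj : m ≤ j) :
    (∑ i ∈ Finset.Icc m N,
        C (e i) * (X ^ (i - m + a) + X ^ (i - m + b) + X ^ (i - m + c) + X ^ (i - m))).coeff j =
      if j + m - a ∈ Finset.Icc m N then e (j + m - a) else 0 := by
  rw [finsetSum_coeff, ← Finset.sum_ite_eq' (Finset.Icc m N) (j + m - a) e]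
  refine Finset.sum_congr rfl fun i hi => ?_
  rw [Finset.mem_Icc] at hi
  simp only [coeff_C_mul, coeff_add, coeff_X_pow]
  rw [if_neg (by omega : j ≠ i - m + b), if_neg (by omega : j ≠ i - m + c),
    if_neg (by omega : j ≠ i - m), add_zero, add_zero, add_zero, mul_ite, mul_one, mul_zero]
  exact if_congr (by omega) rfl rfl

end Polynomial

theorem stmt17_general (b c m a : ℕ) (h1 : c < b) (hm : m = 2*b+c) (ha : a = b+c)
    (d : ℕ → ZMod 2) :
    let A1 : Polynomial (ZMod 2) :=
      (∑ i ∈ Finset.Icc m (m+a-2), C (d (i+(m-a))) * X ^ i) +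
      (∑ i ∈ Finset.Icc m (m+b-2), C (d (i+(m-b))) * X ^ i) +
      (∑ i ∈ Finset.Icc m (m+c-2), C (d (i+(m-c))) * X ^ i)
    let D : Polynomial (ZMod 2) :=
      ∑ i ∈ Finset.Icc m (m+a-2),
        C (A1.coeff i) * (X ^ (i-m+a) + X ^ (i-m+b) + X ^ (i-m+c) + X ^ (i-m))
    let A2 : Polynomial (ZMod 2) := D - ∑ i ∈ Finset.range m, C (D.coeff i) * X ^ i
    A2 = ∑ i ∈ Finset.Icc m (2*a-2), C (d (i+2*m-2*a)) * X ^ i ∧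
      A2.degree ≤ ((2*a-2 : ℕ) : WithBot ℕ) ∧ 2*a-2 = 2*b+2*c-2 ∧ 2*a-2 < m+a-2 := by
  intro A1 D A2
  have hA2 : A2 = ∑ i ∈ Finset.Icc m (2*a-2), C (d (i+2*m-2*a)) * X ^ i := by
    ext j
    rw [coeff_sum_C_mul_X_pow, coeff_sub_sum_range_C_mul_X_pow]
    by_cases hj : m ≤ j
    · rw [if_pos hj, coeff_sum_Icc_reduction_of_le _ (by omega) (by omega) hj]
      simp only [A1, coeff_add, coeff_sum_C_mul_X_pow, Finset.mem_Icc]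
      -- the shifted index `j + m - a ≥ 2 * m - a` lies beyond the second and third sums of `A1`
      rw [if_neg (by omega : ¬ (m ≤ j+m-a ∧ j+m-a ≤ m+b-2)),
        if_neg (by omega : ¬ (m ≤ j+m-a ∧ j+m-a ≤ m+c-2)), add_zero, add_zero]
      by_cases hj' : j ≤ 2*a-2
      · rw [if_pos (by omega), if_pos (by omega), if_pos (by omega),
          show j+m-a+(m-a) = j+2*m-2*a by omega]
      · rw [if_neg (by omega), if_neg (by omega)]
    · rw [if_neg hj, if_neg (by rw [Finset.mem_Icc]; omega)]
  exact ⟨hA2, hA2 ▸ degree_sum_Icc_C_mul_X_pow_le _ _ _, by omega, by omega⟩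

theorem stmt17 (b c m a : ℕ) (h1 : c < b) (h2 : 0 < c) (hm : m = 2*b+c) (ha : a = b+c)
    (d : ℕ → ZMod 2) :
    let A1 : Polynomial (ZMod 2) :=
      (∑ i ∈ Finset.Icc m (m+a-2), C (d (i+(m-a))) * X ^ i) +
      (∑ i ∈ Finset.Icc m (m+b-2), C (d (i+(m-b))) * X ^ i) +
      (∑ i ∈ Finset.Icc m (m+c-2), C (d (i+(m-c))) * X ^ i)
    let D : Polynomial (ZMod 2) :=
      ∑ i ∈ Finset.Icc m (m+a-2),
        C (A1.coeff i) * (X ^ (i-m+a) + X ^ (i-m+b) + X ^ (i-m+c) + X ^ (i-m))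
    let A2 : Polynomial (ZMod 2) := D - ∑ i ∈ Finset.range m, C (D.coeff i) * X ^ i
    A2 = ∑ i ∈ Finset.Icc m (2*a-2), C (d (i+2*m-2*a)) * X ^ i ∧
      A2.degree ≤ ((2*a-2 : ℕ) : WithBot ℕ) ∧ 2*a-2 = 2*b+2*c-2 ∧ 2*a-2 < m+a-2 :=
  stmt17_general b c m a h1 hm ha d
end
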